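/- (Proposition sharp, Hopf–Lax form.) Let J be a nonempty compact interval of ℝ, and suppose u_T is left continuous, takes values in J, and satisfies the Oleinik condition (O) at T. Then U_o^♯(x) := sup { U_o(x) : U_o ∈ II_T(U_T; J) } is finite for every x ∈ ℝ and U_o^♯ ∈ II_T(U_T; J). -/

import Mathlib

open Filter MeasureTheory

/-- Condition (f): `f` is `C²`, strongly convex (`f'' > 0` everywhere), and
`f' → ∓∞` at `∓∞`. -/
def CondF (f : ℝ → ℝ) : Prop :=
  ContDiff ℝ 2 f ∧ (∀ x, 0 < deriv (deriv f) x) ∧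
    Tendsto (deriv f) atBot atBot ∧ Tendsto (deriv f) atTop atTop

/-- The Legendre transform `f*(y) = sup_x (y·x − f(x))`. -/
noncomputable def legendre (f : ℝ → ℝ) (y : ℝ) : ℝ :=
  sSup (Set.range fun x => y * x - f x)

/-- `U_T(x) = ∫_{x̌}^x u_T`. -/
noncomputable def UT (uT : ℝ → ℝ) (xc x : ℝ) : ℝ := ∫ ξ in xc..x, uT ξ

/-- `U_o^♭(x) = sup_ξ [U_T(ξ) − T f*((ξ−x)/T)]`. -/
noncomputable def Uflat (f : ℝ → ℝ) (T : ℝ) (uT : ℝ → ℝ) (xc x : ℝ) : ℝ :=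
  sSup (Set.range fun ξ => UT uT xc ξ - T * legendre f ((ξ - x) / T))

/-- `M(x)`: the set of maximizers in the definition of `U_o^♭(x)`. -/
def MSet (f : ℝ → ℝ) (T : ℝ) (uT : ℝ → ℝ) (xc x : ℝ) : Set ℝ :=
  {ξ | UT uT xc ξ = Uflat f T uT xc x + T * legendre f ((ξ - x) / T)}

/-- Oleinik condition (O) at `T`. -/
def Oleinik (f : ℝ → ℝ) (T : ℝ) (uT : ℝ → ℝ) : Prop :=
  ∀ x Δ : ℝ, 0 < Δ → deriv f (uT (x + Δ)) - deriv f (uT x) ≤ Δ / T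

/-- The Hopf–Lax operator at time `T`: `(S_T U)(x) = inf_ξ [U(ξ) + T f*((x−ξ)/T)]`. -/
noncomputable def HopfLax (f : ℝ → ℝ) (T : ℝ) (U : ℝ → ℝ) (x : ℝ) : ℝ :=
  sInf (Set.range fun ξ => U ξ + T * legendre f ((x - ξ) / T))

/-- Left continuity of a real function. -/
def LeftCts (u : ℝ → ℝ) : Prop :=
  ∀ x, Tendsto u (nhdsWithin x (Set.Iio x)) (nhds (u x))

/-- `II_T(U_T; J)`: Lipschitz functions with a.e. derivative in `J` evolving into `U_T`
under the Hopf–Lax semigroup. -/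
def IIT (f : ℝ → ℝ) (T : ℝ) (uT : ℝ → ℝ) (xc : ℝ) (J : Set ℝ) : Set (ℝ → ℝ) :=
  {U | (∃ K, LipschitzWith K U) ∧ (∀ᵐ x ∂volume, deriv U x ∈ J) ∧
    ∀ x, HopfLax f T U x = UT uT xc x}

/-- `U_o^♯(x) = sup { U(x) : U ∈ II_T(U_T; J) }`. -/
noncomputable def Usharp (f : ℝ → ℝ) (T : ℝ) (uT : ℝ → ℝ) (xc : ℝ) (J : Set ℝ) (x : ℝ) : ℝ :=
  sSup ((fun U : ℝ → ℝ => U x) '' IIT f T uT xc J)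

/-!
Let `g = (f')⁻¹`, so that `(f*)' = g`, and let `ξ(y) = y - T f'(u_T(y))` be the foot of the
backward characteristic through `y`. The Oleinik condition says exactly that
`u_T ≤ g((· - ξ(y)) / T)` to the right of `y` and `u_T ≥ g((· - ξ(y)) / T)` to its left, so
`η ↦ U_T(η) - T f*((η - ξ(y)) / T)` is maximal at `η = y`. Hence the envelope
`U_o^♭(x) = sup_η [U_T(η) - T f*((η - x) / T)]` has slopes in `J = [m, M]`, evolves into `U_T`,
and lies below every element of `II_T(U_T; J)`. Conversely, every such element touches `U_o^♭` at
its Hopf–Lax minimisers, and the minimisers for `y' ↑ y` are squeezed onto `ξ(y)`; by left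
continuity of `u_T` the element equals `U_o^♭` at every foot `ξ(y)`. The largest function with
slopes in `[m, M]` taking these values at the feet is therefore the greatest element of
`II_T(U_T; J)`, hence equal to `U_o^♯`.
-/

open Set Topology

noncomputable def derivInv (f : ℝ → ℝ) : ℝ → ℝ := Function.invFun (deriv f)

namespace CondF

variable {f : ℝ → ℝ}

theorem differentiable (hf : CondF f) : Differentiable ℝ f :=
  hf.1.differentiable (by norm_num)

theorem continuous_deriv (hf : CondF f) : Continuous (deriv f) :=
  hf.1.continuous_deriv (by norm_num)

theorem strictMono_deriv (hf : CondF f) : StrictMono (deriv f) :=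
  strictMono_of_deriv_pos hf.2.1

theorem surjective_deriv (hf : CondF f) : Function.Surjective (deriv f) :=
  hf.continuous_deriv.surjective hf.2.2.2 hf.2.2.1

theorem convexOn (hf : CondF f) : ConvexOn ℝ univ f :=
  hf.strictMono_deriv.monotone.convexOn_univ_of_deriv hf.differentiable

theorem deriv_mul_sub_add_le (hf : CondF f) (a x : ℝ) : deriv f a * (x - a) + f a ≤ f x := by
  rcases lt_trichotomy a x with h | rfl | h
  · have := hf.convexOn.deriv_le_slope (mem_univ a) (mem_univ x) h
      hf.differentiable.differentiableAt
    rw [slope_def_field, le_div_iff₀ (sub_pos.2 h)] at this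
    linarith
  · simp
  · have := hf.convexOn.slope_le_deriv (mem_univ x) (mem_univ a) h
      hf.differentiable.differentiableAt
    rw [slope_def_field, div_le_iff₀ (sub_pos.2 h)] at this
    linarith

theorem deriv_derivInv (hf : CondF f) (y : ℝ) : deriv f (derivInv f y) = y :=
  Function.invFun_eq (hf.surjective_deriv y)

theorem derivInv_deriv (hf : CondF f) (x : ℝ) : derivInv f (deriv f x) = x :=
  Function.leftInverse_invFun hf.strictMono_deriv.injective x

theorem strictMono_derivInv (hf : CondF f) : StrictMono (derivInv f) := fun a b hab => by
  rwa [← hf.strictMono_deriv.lt_iff_lt, hf.deriv_derivInv, hf.deriv_derivInv]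

theorem continuous_derivInv (hf : CondF f) : Continuous (derivInv f) :=
  hf.strictMono_derivInv.monotone.continuous_of_surjective
    (Function.leftInverse_invFun hf.strictMono_deriv.injective).surjective

theorem le_legendre_derivInv (hf : CondF f) (y x : ℝ) :
    y * x - f x ≤ y * derivInv f y - f (derivInv f y) := by
  have := hf.deriv_mul_sub_add_le (derivInv f y) x
  rw [hf.deriv_derivInv] at this
  linarith

theorem legendre_eq (hf : CondF f) (y : ℝ) :
    legendre f y = y * derivInv f y - f (derivInv f y) :=
  IsGreatest.csSup_eq ⟨⟨_, rfl⟩, forall_mem_range.2 (hf.le_legendre_derivInv y)⟩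

theorem le_legendre (hf : CondF f) (y x : ℝ) : y * x - f x ≤ legendre f y :=
  hf.legendre_eq y ▸ hf.le_legendre_derivInv y x

theorem mul_abs_sub_le_legendre (hf : CondF f) (c z : ℝ) :
    c * |z| - max (f c) (f (-c)) ≤ legendre f z := by
  rcases le_total 0 z with h | h
  · have := hf.le_legendre z c
    rw [abs_of_nonneg h]
    linarith [le_max_left (f c) (f (-c))]
  · have := hf.le_legendre z (-c)
    rw [abs_of_nonpos h]
    linarith [le_max_right (f c) (f (-c))]

theorem derivInv_mul_sub_le_legendre_sub (hf : CondF f) (s t : ℝ) :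
    derivInv f s * (t - s) ≤ legendre f t - legendre f s := by
  have := hf.le_legendre t (derivInv f s)
  rw [hf.legendre_eq s]
  linarith

theorem slope_legendre_mem_Icc (hf : CondF f) {s t : ℝ} (hst : s < t) :
    slope (legendre f) s t ∈ Icc (derivInv f s) (derivInv f t) := by
  have h₁ := hf.derivInv_mul_sub_le_legendre_sub s t
  have h₂ := hf.derivInv_mul_sub_le_legendre_sub t s
  rw [slope_def_field, mem_Icc, le_div_iff₀ (sub_pos.2 hst), div_le_iff₀ (sub_pos.2 hst)]
  constructor <;> linarith

theorem hasDerivAt_legendre (hf : CondF f) (y : ℝ) :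
    HasDerivAt (legendre f) (derivInv f y) y := by
  rw [hasDerivAt_iff_tendsto_slope]
  have hbounds : ∀ z ≠ y, slope (legendre f) y z ∈
      Icc (derivInv f (min y z)) (derivInv f (max y z)) := fun z hz => by
    rcases hz.lt_or_gt with h | h
    · rw [min_eq_right h.le, max_eq_left h.le, slope_comm]
      exact hf.slope_legendre_mem_Icc h
    · rw [min_eq_left h.le, max_eq_right h.le]
      exact hf.slope_legendre_mem_Icc h
  have hlim : ∀ φ : ℝ → ℝ, Continuous φ → φ y = y →
      Tendsto (fun z => derivInv f (φ z)) (𝓝[≠] y) (𝓝 (derivInv f y)) := by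
    intro φ hφ hy
    have := (hf.continuous_derivInv.comp hφ).tendsto y
    rw [Function.comp_apply, hy] at this
    exact this.mono_left nhdsWithin_le_nhds
  exact tendsto_of_tendsto_of_tendsto_of_le_of_le'
    (hlim _ (continuous_const.min continuous_id) (min_self y))
    (hlim _ (continuous_const.max continuous_id) (max_self y))
    (eventually_nhdsWithin_of_forall fun z hz => (hbounds z hz).1)
    (eventually_nhdsWithin_of_forall fun z hz => (hbounds z hz).2)

theorem continuous_legendre (hf : CondF f) : Continuous (legendre f) :=
  continuous_iff_continuousAt.2 fun y => (hf.hasDerivAt_legendre y).continuousAt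

theorem integral_derivInv_div {T : ℝ} (hf : CondF f) (hT : T ≠ 0) (c a b : ℝ) :
    ∫ s in a..b, derivInv f ((s - c) / T) =
      T * legendre f ((b - c) / T) - T * legendre f ((a - c) / T) := by
  refine intervalIntegral.integral_eq_sub_of_hasDerivAt
    (f := fun s => T * legendre f ((s - c) / T)) (fun s _ => ?_)
    ((hf.continuous_derivInv.comp ((continuous_sub_right c).div_const T)).intervalIntegrable a b)
  have := ((hf.hasDerivAt_legendre ((s - c) / T)).comp s
    (((hasDerivAt_id s).sub_const c).div_const T)).const_mul T
  exact this.congr_deriv (by field_simp)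

end CondF

def SlopeIn (m M : ℝ) (U : ℝ → ℝ) : Prop :=
  ∀ ⦃x y : ℝ⦄, x ≤ y → m * (y - x) ≤ U y - U x ∧ U y - U x ≤ M * (y - x)

namespace SlopeIn

variable {m M : ℝ} {U : ℝ → ℝ}

theorem abs_sub_le (h : SlopeIn m M U) (a b : ℝ) : |U b - U a| ≤ max |m| |M| * |b - a| := by
  wlog hab : a ≤ b generalizing a b
  · rw [abs_sub_comm, abs_sub_comm b]
    exact this b a (le_of_not_ge hab)
  obtain ⟨hm, hM⟩ := h hab
  have hba : 0 ≤ b - a := sub_nonneg.2 hab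
  rw [abs_of_nonneg hba, abs_le]
  constructor
  · nlinarith [neg_abs_le m, le_max_left |m| |M|]
  · nlinarith [le_abs_self M, le_max_right |m| |M|]

theorem lipschitzWith (h : SlopeIn m M U) : LipschitzWith (max |m| |M|).toNNReal U :=
  LipschitzWith.of_dist_le_mul fun a b => by
    rw [Real.dist_eq, Real.dist_eq, Real.coe_toNNReal _ ((abs_nonneg m).trans (le_max_left _ _)),
      abs_sub_comm, abs_sub_comm a]
    exact h.abs_sub_le a b

theorem continuous (h : SlopeIn m M U) : Continuous U :=
  h.lipschitzWith.continuous

theorem ae_deriv_mem (h : SlopeIn m M U) : ∀ᵐ x, deriv U x ∈ Icc m M := by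
  filter_upwards [h.lipschitzWith.ae_differentiableAt] with x hx
  have hslope : ∀ z ∈ Ioi x, slope U x z ∈ Icc m M := fun z hz => by
    have hxz : 0 < z - x := sub_pos.2 hz
    obtain ⟨hm, hM⟩ := h (le_of_lt hz)
    rw [slope_def_field, mem_Icc, le_div_iff₀ hxz, div_le_iff₀ hxz]
    constructor <;> linarith
  have hlim : Tendsto (slope U x) (𝓝[>] x) (𝓝 (deriv U x)) :=
    (hasDerivAt_iff_tendsto_slope.1 hx.hasDerivAt).mono_left
      (nhdsWithin_mono x fun z hz => ne_of_gt hz)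
  exact isClosed_Icc.mem_of_tendsto hlim (eventually_nhdsWithin_of_forall hslope)

theorem le_add_max (h : SlopeIn m M U) (x s : ℝ) :
    U x ≤ U s + max (m * (x - s)) (M * (x - s)) := by
  rcases le_total s x with hsx | hxs
  · have := (h hsx).2
    have := le_max_right (m * (x - s)) (M * (x - s))
    linarith
  · have := (h hxs).1
    have := le_max_left (m * (x - s)) (M * (x - s))
    linarith

theorem comp_add_right_add (h : SlopeIn m M U) (d c : ℝ) : SlopeIn m M fun x => U (x + d) + c :=
  fun x y hxy => by
    have := h (show x + d ≤ y + d by linarith)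
    rw [add_sub_add_right_eq_sub] at this
    constructor <;> linarith [this.1, this.2]

end SlopeIn

theorem slopeIn_max_mul {m M : ℝ} (hmM : m ≤ M) : SlopeIn m M fun d => max (m * d) (M * d) :=
  fun x y hxy => by
    have : 0 ≤ y - x := sub_nonneg.2 hxy
    dsimp only
    constructor
    · rcases le_total (m * x) (M * x) with h | h
      · rw [max_eq_right h]; nlinarith [le_max_right (m * y) (M * y)]
      · rw [max_eq_left h]; nlinarith [le_max_left (m * y) (M * y)]
    · rcases le_total (m * y) (M * y) with h | h
      · rw [max_eq_right h]; nlinarith [le_max_right (m * x) (M * x)]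
      · rw [max_eq_left h]; nlinarith [le_max_left (m * x) (M * x)]

theorem LipschitzWith.slopeIn {m M : ℝ} {U : ℝ → ℝ} {K : NNReal} (hL : LipschitzWith K U)
    (hd : ∀ᵐ x, deriv U x ∈ Icc m M) : SlopeIn m M U := fun x y hxy => by
  have hac := (hL.lipschitzOnWith (s := uIcc x y)).absolutelyContinuousOnInterval
  rw [← hac.integral_deriv_eq_sub]
  have hint := hac.intervalIntegrable_deriv
  constructor
  · simpa [mul_comm] using intervalIntegral.integral_mono_ae hxy intervalIntegrable_const hint
      (hd.mono fun s hs => hs.1)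
  · simpa [mul_comm] using intervalIntegral.integral_mono_ae hxy hint intervalIntegrable_const
      (hd.mono fun s hs => hs.2)

section Envelopes

variable {ι : Type*} [Nonempty ι] {m M : ℝ} {U : ι → ℝ → ℝ}

theorem slopeIn_ciSup (h : ∀ i, SlopeIn m M (U i)) (hb : ∀ x, BddAbove (range fun i => U i x)) :
    SlopeIn m M fun x => ⨆ i, U i x := fun x y hxy => by
  constructor
  · have : (⨆ i, U i x) ≤ (⨆ i, U i y) - m * (y - x) := ciSup_le fun i => by
      have := (h i hxy).1
      have := le_ciSup (hb y) i
      linarith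
    linarith
  · have : (⨆ i, U i y) ≤ (⨆ i, U i x) + M * (y - x) := ciSup_le fun i => by
      have := (h i hxy).2
      have := le_ciSup (hb x) i
      linarith
    linarith

theorem slopeIn_ciInf (h : ∀ i, SlopeIn m M (U i)) (hb : ∀ x, BddBelow (range fun i => U i x)) :
    SlopeIn m M fun x => ⨅ i, U i x := fun x y hxy => by
  constructor
  · have : (⨅ i, U i x) + m * (y - x) ≤ ⨅ i, U i y := le_ciInf fun i => by
      have := (h i hxy).1
      have := ciInf_le (hb x) i
      linarith
    linarith
  · have : (⨅ i, U i y) - M * (y - x) ≤ ⨅ i, U i x := le_ciInf fun i => by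
      have := (h i hxy).2
      have := ciInf_le (hb y) i
      linarith
    linarith

end Envelopes

namespace LipschitzWith

variable {f U : ℝ → ℝ} {T : ℝ} {K : NNReal}

theorem exists_add_abs_sub_le_hopfLax_term (hf : CondF f) (hT : 0 < T)
    (hL : LipschitzWith K U) :
    ∃ C, ∀ x ξ, U x + |x - ξ| - C ≤ U ξ + T * legendre f ((x - ξ) / T) := by
  refine ⟨T * max (f (K + 1)) (f (-(K + 1))), fun x ξ => ?_⟩
  have hU : U x - U ξ ≤ K * |x - ξ| := by
    simpa [Real.dist_eq] using (le_abs_self _).trans (hL.dist_le_mul x ξ)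
  have hleg := mul_le_mul_of_nonneg_left (hf.mul_abs_sub_le_legendre (K + 1) ((x - ξ) / T))
    hT.le
  rw [abs_div, abs_of_pos hT] at hleg
  have hscale : T * ((K + 1) * (|x - ξ| / T) - max (f (K + 1)) (f (-(K + 1)))) =
      (K + 1) * |x - ξ| - T * max (f (K + 1)) (f (-(K + 1))) := by
    field_simp
  linarith

theorem bddBelow_hopfLax_terms (hf : CondF f) (hT : 0 < T) (hL : LipschitzWith K U) (x : ℝ) :
    BddBelow (range fun ξ => U ξ + T * legendre f ((x - ξ) / T)) := by
  obtain ⟨C, hC⟩ := hL.exists_add_abs_sub_le_hopfLax_term hf hT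
  exact ⟨U x - C, forall_mem_range.2 fun ξ => by linarith [hC x ξ, abs_nonneg (x - ξ)]⟩

theorem exists_hopfLax_eq (hf : CondF f) (hT : 0 < T) (hL : LipschitzWith K U) (x : ℝ) :
    ∃ ξ, U ξ + T * legendre f ((x - ξ) / T) = HopfLax f T U x := by
  have hcont : Continuous fun ξ => U ξ + T * legendre f ((x - ξ) / T) :=
    hL.continuous.add (continuous_const.mul
      (hf.continuous_legendre.comp ((continuous_sub_left x).div_const T)))
  obtain ⟨C, hC⟩ := hL.exists_add_abs_sub_le_hopfLax_term hf hT
  have hcoercive : Tendsto (fun ξ => U ξ + T * legendre f ((x - ξ) / T)) (cocompact ℝ) atTop :=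
    tendsto_atTop_mono (fun ξ => by
        linarith [hC x ξ, abs_sub_abs_le_abs_sub ξ x, abs_sub_comm x ξ, Real.norm_eq_abs ξ])
      (tendsto_atTop_add_const_right _ (U x - |x| - C) tendsto_norm_cocompact_atTop)
  obtain ⟨ξ, hξ⟩ := hcont.exists_forall_le hcoercive
  refine ⟨ξ, (IsLeast.csInf_eq ?_).symm⟩
  exact ⟨⟨ξ, rfl⟩, forall_mem_range.2 hξ⟩

end LipschitzWith

section TerminalProfile

variable {uT : ℝ → ℝ} {m M : ℝ}

theorem intervalIntegrable_of_mem_Icc (huT : Measurable uT) (hmem : ∀ x, uT x ∈ Icc m M)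
    (a b : ℝ) : IntervalIntegrable uT volume a b :=
  intervalIntegrable_const.mono_fun' huT.aestronglyMeasurable.restrict
    (ae_of_all _ fun s => (abs_le_max_abs_abs (hmem s).1 (hmem s).2 : |uT s| ≤ max |m| |M|))

theorem UT_sub_UT (huT : Measurable uT) (hmem : ∀ x, uT x ∈ Icc m M) (xc a b : ℝ) :
    UT uT xc b - UT uT xc a = ∫ s in a..b, uT s :=
  intervalIntegral.integral_interval_sub_left (intervalIntegrable_of_mem_Icc huT hmem _ _)
    (intervalIntegrable_of_mem_Icc huT hmem _ _)

theorem slopeIn_UT (huT : Measurable uT) (hmem : ∀ x, uT x ∈ Icc m M) (xc : ℝ) :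
    SlopeIn m M (UT uT xc) := fun x y hxy => by
  have hint := intervalIntegrable_of_mem_Icc huT hmem x y
  rw [UT_sub_UT huT hmem]
  constructor
  · simpa [mul_comm] using intervalIntegral.integral_mono_on hxy intervalIntegrable_const hint
      fun s _ => (hmem s).1
  · simpa [mul_comm] using intervalIntegral.integral_mono_on hxy hint intervalIntegrable_const
      fun s _ => (hmem s).2

end TerminalProfile

structure TerminalData (f : ℝ → ℝ) (T : ℝ) (uT : ℝ → ℝ) (m M : ℝ) : Prop where
  condF : CondF f
  pos : 0 < T
  measurable : Measurable uT
  mem_Icc : ∀ x, uT x ∈ Icc m M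
  oleinik : Oleinik f T uT

/-- The foot at time `0` of the backward characteristic through `(y, T)`. -/
noncomputable def charFoot (f : ℝ → ℝ) (T : ℝ) (uT : ℝ → ℝ) (y : ℝ) : ℝ :=
  y - T * deriv f (uT y)

theorem Uflat_eq_iSup (f : ℝ → ℝ) (T : ℝ) (uT : ℝ → ℝ) (xc x : ℝ) :
    Uflat f T uT xc x = ⨆ d, UT uT xc (x + d) - T * legendre f (d / T) := by
  show (⨆ η, _) = _
  rw [← (Equiv.addLeft x).iSup_comp]
  simp

/-- The largest function with slopes in `[m, M]` that agrees with `Uflat` at the feet of all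
characteristics. -/
noncomputable def Umax (f : ℝ → ℝ) (T : ℝ) (uT : ℝ → ℝ) (xc m M x : ℝ) : ℝ :=
  ⨅ y, Uflat f T uT xc (charFoot f T uT y) +
    max (m * (x - charFoot f T uT y)) (M * (x - charFoot f T uT y))

namespace TerminalData

variable {f uT : ℝ → ℝ} {T m M : ℝ} (D : TerminalData f T uT m M) (xc : ℝ)
include D

theorem intervalIntegrable (a b : ℝ) : IntervalIntegrable uT volume a b :=
  intervalIntegrable_of_mem_Icc D.measurable D.mem_Icc a b

theorem continuous_derivInv_div (ξ : ℝ) : Continuous fun s => derivInv f ((s - ξ) / T) :=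
  D.condF.continuous_derivInv.comp ((continuous_sub_right ξ).div_const T)

theorem uT_le_derivInv_charFoot {x s : ℝ} (hxs : x ≤ s) :
    uT s ≤ derivInv f ((s - charFoot f T uT x) / T) := by
  have hO : deriv f (uT s) - deriv f (uT x) ≤ (s - x) / T := by
    rcases hxs.eq_or_lt with rfl | h
    · simp
    · simpa using D.oleinik x (s - x) (sub_pos.2 h)
  have harg : deriv f (uT s) ≤ (s - charFoot f T uT x) / T := by
    rw [charFoot, le_div_iff₀ D.pos]
    rw [le_div_iff₀ D.pos] at hO
    linarith
  simpa only [D.condF.derivInv_deriv] using D.condF.strictMono_derivInv.monotone harg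

theorem derivInv_charFoot_le_uT {x s : ℝ} (hsx : s ≤ x) :
    derivInv f ((s - charFoot f T uT x) / T) ≤ uT s := by
  have hO : deriv f (uT x) - deriv f (uT s) ≤ (x - s) / T := by
    rcases hsx.eq_or_lt with rfl | h
    · simp
    · simpa using D.oleinik s (x - s) (sub_pos.2 h)
  have harg : (s - charFoot f T uT x) / T ≤ deriv f (uT s) := by
    rw [charFoot, div_le_iff₀ D.pos]
    rw [le_div_iff₀ D.pos] at hO
    linarith
  simpa only [D.condF.derivInv_deriv] using D.condF.strictMono_derivInv.monotone harg

theorem backward_sub_backward (ξ a b : ℝ) :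
    (UT uT xc b - T * legendre f ((b - ξ) / T)) - (UT uT xc a - T * legendre f ((a - ξ) / T)) =
      ∫ s in a..b, (uT s - derivInv f ((s - ξ) / T)) := by
  rw [intervalIntegral.integral_sub (D.intervalIntegrable a b)
    ((D.continuous_derivInv_div ξ).intervalIntegrable a b),
    D.condF.integral_derivInv_div D.pos.ne', ← UT_sub_UT D.measurable D.mem_Icc]
  ring

theorem backward_le_backward_charFoot (x η : ℝ) :
    UT uT xc η - T * legendre f ((η - charFoot f T uT x) / T) ≤
      UT uT xc x - T * legendre f ((x - charFoot f T uT x) / T) := by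
  rw [← sub_nonpos, D.backward_sub_backward]
  rcases le_total x η with h | h
  · rw [← neg_nonneg, ← intervalIntegral.integral_neg]
    exact intervalIntegral.integral_nonneg h fun s hs =>
      neg_nonneg.2 (sub_nonpos.2 (D.uT_le_derivInv_charFoot hs.1))
  · rw [intervalIntegral.integral_symm, neg_nonpos]
    exact intervalIntegral.integral_nonneg h fun s hs =>
      sub_nonneg.2 (D.derivInv_charFoot_le_uT hs.2)

theorem le_charFoot_of_lt {y' y ξ : ℝ} (hy : y' < y)
    (h : UT uT xc y - T * legendre f ((y - ξ) / T) ≤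
      UT uT xc y' - T * legendre f ((y' - ξ) / T)) :
    ξ ≤ charFoot f T uT y := by
  by_contra! hlt
  rw [← sub_nonpos, D.backward_sub_backward] at h
  refine h.not_gt (intervalIntegral.intervalIntegral_pos_of_pos_on
    ((D.intervalIntegrable y' y).sub ((D.continuous_derivInv_div ξ).intervalIntegrable y' y))
    (fun s hs => ?_) hy)
  have := D.condF.strictMono_derivInv (div_lt_div_of_pos_right (sub_lt_sub_left hlt s) D.pos)
  linarith [D.derivInv_charFoot_le_uT hs.2.le]

theorem charFoot_le_of_gt {y y' ξ : ℝ} (hy : y < y')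
    (h : UT uT xc y - T * legendre f ((y - ξ) / T) ≤
      UT uT xc y' - T * legendre f ((y' - ξ) / T)) :
    charFoot f T uT y ≤ ξ := by
  by_contra! hlt
  rw [← sub_nonneg, D.backward_sub_backward] at h
  refine h.not_gt ?_
  rw [← neg_pos, ← intervalIntegral.integral_neg]
  refine intervalIntegral.intervalIntegral_pos_of_pos_on
    ((D.intervalIntegrable y y').sub ((D.continuous_derivInv_div ξ).intervalIntegrable y y')).neg
    (fun s hs => ?_) hy
  have := D.condF.strictMono_derivInv (div_lt_div_of_pos_right (sub_lt_sub_left hlt s) D.pos)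
  linarith [D.uT_le_derivInv_charFoot hs.1.le]

theorem exists_backward_le :
    ∃ C, ∀ x η, UT uT xc η - T * legendre f ((η - x) / T) ≤ UT uT xc x + C := by
  obtain ⟨C, hC⟩ := (slopeIn_UT D.measurable D.mem_Icc xc).lipschitzWith
    |>.exists_add_abs_sub_le_hopfLax_term D.condF D.pos
  exact ⟨C, fun x η => by linarith [hC η x, abs_nonneg (η - x)]⟩

theorem bddAbove_backward (x : ℝ) :
    BddAbove (range fun η => UT uT xc η - T * legendre f ((η - x) / T)) := by
  obtain ⟨C, hC⟩ := D.exists_backward_le xc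
  exact ⟨UT uT xc x + C, forall_mem_range.2 (hC x)⟩

theorem backward_le_Uflat (x η : ℝ) :
    UT uT xc η - T * legendre f ((η - x) / T) ≤ Uflat f T uT xc x :=
  le_csSup (D.bddAbove_backward xc x) ⟨η, rfl⟩

theorem slopeIn_Uflat : SlopeIn m M (Uflat f T uT xc) := by
  obtain ⟨C, hC⟩ := D.exists_backward_le xc
  rw [show Uflat f T uT xc = _ from funext (Uflat_eq_iSup f T uT xc)]
  exact slopeIn_ciSup (fun d => by
    simpa only [sub_eq_add_neg] using (slopeIn_UT D.measurable D.mem_Icc xc).comp_add_right_add d _)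
    fun x => ⟨UT uT xc x + C, forall_mem_range.2 fun d => by simpa using hC x (x + d)⟩

theorem Uflat_charFoot (y : ℝ) :
    Uflat f T uT xc (charFoot f T uT y) =
      UT uT xc y - T * legendre f ((y - charFoot f T uT y) / T) :=
  le_antisymm (csSup_le (range_nonempty _) (forall_mem_range.2
    (D.backward_le_backward_charFoot xc y))) (D.backward_le_Uflat xc _ y)

theorem Uflat_le_of_hopfLax_eq {U : ℝ → ℝ} {K : NNReal} (hL : LipschitzWith K U)
    (hU : ∀ x, HopfLax f T U x = UT uT xc x) (x : ℝ) : Uflat f T uT xc x ≤ U x :=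
  csSup_le (range_nonempty _) (forall_mem_range.2 fun η => by
    have : HopfLax f T U η ≤ U x + T * legendre f ((η - x) / T) :=
      csInf_le (hL.bddBelow_hopfLax_terms D.condF D.pos η) ⟨x, rfl⟩
    rw [hU η] at this
    linarith)

theorem hopfLax_eq_UT {V : ℝ → ℝ} (hle : ∀ x, Uflat f T uT xc x ≤ V x)
    (heq : ∀ y, V (charFoot f T uT y) = Uflat f T uT xc (charFoot f T uT y)) (x : ℝ) :
    HopfLax f T V x = UT uT xc x := by
  have hlower : ∀ ξ, UT uT xc x ≤ V ξ + T * legendre f ((x - ξ) / T) := fun ξ => by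
    linarith [D.backward_le_Uflat xc ξ x, hle ξ]
  refine le_antisymm ?_ (le_csInf (range_nonempty _) (forall_mem_range.2 hlower))
  calc HopfLax f T V x ≤ V (charFoot f T uT x) + T * legendre f ((x - charFoot f T uT x) / T) :=
        csInf_le ⟨_, forall_mem_range.2 hlower⟩ ⟨_, rfl⟩
    _ = UT uT xc x := by rw [heq, D.Uflat_charFoot]; ring

theorem le : m ≤ M :=
  (D.mem_Icc 0).1.trans (D.mem_Icc 0).2

theorem tendsto_charFoot_nhdsLT (hlc : LeftCts uT) (y : ℝ) :
    Tendsto (charFoot f T uT) (𝓝[<] y) (𝓝 (charFoot f T uT y)) :=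
  (tendsto_id.mono_left nhdsWithin_le_nhds).sub
    (tendsto_const_nhds.mul ((D.condF.continuous_deriv.tendsto _).comp (hlc y)))

/-- The witness is a minimiser in the Hopf–Lax formula for `U` at `y'`. -/
theorem exists_eq_Uflat_mem_Icc {U : ℝ → ℝ} {K : NNReal} (hL : LipschitzWith K U)
    (hU : ∀ x, HopfLax f T U x = UT uT xc x) {y'' y' y : ℝ} (h₁ : y'' < y') (h₂ : y' < y) :
    ∃ ξ, U ξ = Uflat f T uT xc ξ ∧ ξ ∈ Icc (charFoot f T uT y'') (charFoot f T uT y) := by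
  obtain ⟨ξ, hξ⟩ := hL.exists_hopfLax_eq D.condF D.pos y'
  rw [hU] at hξ
  have heq : U ξ = Uflat f T uT xc ξ :=
    le_antisymm (by linarith [D.backward_le_Uflat xc ξ y'])
      (D.Uflat_le_of_hopfLax_eq xc hL hU ξ)
  have hmax : ∀ η, UT uT xc η - T * legendre f ((η - ξ) / T) ≤
      UT uT xc y' - T * legendre f ((y' - ξ) / T) := fun η => by
    linarith [D.backward_le_Uflat xc ξ η]
  exact ⟨ξ, heq, D.charFoot_le_of_gt xc h₁ (hmax y''), D.le_charFoot_of_lt xc h₂ (hmax y)⟩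

theorem eq_Uflat_charFoot (hlc : LeftCts uT) {U : ℝ → ℝ} {K : NNReal} (hL : LipschitzWith K U)
    (hU : ∀ x, HopfLax f T U x = UT uT xc x) (y : ℝ) :
    U (charFoot f T uT y) = Uflat f T uT xc (charFoot f T uT y) := by
  have hcontact : ∀ y'', ∃ ξ, y'' < y →
      U ξ = Uflat f T uT xc ξ ∧ ξ ∈ Icc (charFoot f T uT y'') (charFoot f T uT y) := by
    intro y''
    by_cases h : y'' < y
    · obtain ⟨ξ, hξ⟩ := D.exists_eq_Uflat_mem_Icc xc hL hU (left_lt_add_div_two.2 h)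
        (add_div_two_lt_right.2 h)
      exact ⟨ξ, fun _ => hξ⟩
    · exact ⟨0, fun h' => absurd h' h⟩
  choose ξ hξ using hcontact
  have hlim : Tendsto ξ (𝓝[<] y) (𝓝 (charFoot f T uT y)) :=
    tendsto_of_tendsto_of_tendsto_of_le_of_le' (D.tendsto_charFoot_nhdsLT hlc y)
      tendsto_const_nhds (eventually_nhdsWithin_of_forall fun z hz => (hξ z hz).2.1)
      (eventually_nhdsWithin_of_forall fun z hz => (hξ z hz).2.2)
  exact (isClosed_eq hL.continuous (D.slopeIn_Uflat xc).continuous).mem_of_tendsto hlim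
    (eventually_nhdsWithin_of_forall fun z hz => (hξ z hz).1)

theorem bddBelow_Umax_terms (x : ℝ) :
    BddBelow (range fun y => Uflat f T uT xc (charFoot f T uT y) +
      max (m * (x - charFoot f T uT y)) (M * (x - charFoot f T uT y))) :=
  ⟨Uflat f T uT xc x, forall_mem_range.2 fun _ => (D.slopeIn_Uflat xc).le_add_max x _⟩

theorem Uflat_le_Umax (x : ℝ) : Uflat f T uT xc x ≤ Umax f T uT xc m M x :=
  le_ciInf fun _ => (D.slopeIn_Uflat xc).le_add_max x _

theorem Umax_charFoot (y : ℝ) :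
    Umax f T uT xc m M (charFoot f T uT y) = Uflat f T uT xc (charFoot f T uT y) :=
  le_antisymm ((ciInf_le (D.bddBelow_Umax_terms xc _) y).trans_eq (by simp))
    (D.Uflat_le_Umax xc _)

theorem slopeIn_Umax : SlopeIn m M (Umax f T uT xc m M) :=
  slopeIn_ciInf (fun y => by
      simpa only [← sub_eq_add_neg, add_comm] using
        (slopeIn_max_mul D.le).comp_add_right_add (-charFoot f T uT y)
          (Uflat f T uT xc (charFoot f T uT y)))
    (D.bddBelow_Umax_terms xc)

theorem isGreatest_Umax (hlc : LeftCts uT) :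
    IsGreatest (IIT f T uT xc (Icc m M)) (Umax f T uT xc m M) := by
  refine ⟨⟨⟨_, (D.slopeIn_Umax xc).lipschitzWith⟩, (D.slopeIn_Umax xc).ae_deriv_mem,
    D.hopfLax_eq_UT xc (D.Uflat_le_Umax xc) (D.Umax_charFoot xc)⟩, ?_⟩
  rintro U ⟨⟨K, hL⟩, hd, hU⟩ x
  refine le_ciInf fun y => ?_
  rw [← D.eq_Uflat_charFoot xc hlc hL hU]
  exact (hL.slopeIn hd).le_add_max x _

end TerminalData

theorem stmt_14 (f : ℝ → ℝ) (hf : CondF f) (T : ℝ) (hT : 0 < T)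
    (J : Set ℝ) (hJne : J.Nonempty) (hJcp : IsCompact J) (hJoc : J.OrdConnected)
    (uT : ℝ → ℝ) (huT : Measurable uT)
    (hlc : LeftCts uT) (huTJ : ∀ x, uT x ∈ J) (hO : Oleinik f T uT) (xc : ℝ) :
    (∀ x : ℝ, ((fun U : ℝ → ℝ => U x) '' IIT f T uT xc J).Nonempty ∧
      BddAbove ((fun U : ℝ → ℝ => U x) '' IIT f T uT xc J)) ∧
    Usharp f T uT xc J ∈ IIT f T uT xc J := by
  have hJ : J = Icc (sInf J) (sSup J) :=
    eq_Icc_of_connected_compact ⟨hJne, hJoc.isPreconnected⟩ hJcp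
  have D : TerminalData f T uT (sInf J) (sSup J) := ⟨hf, hT, huT, hJ ▸ huTJ, hO⟩
  have hG := D.isGreatest_Umax xc hlc
  rw [← hJ] at hG
  have hGx : ∀ x, IsGreatest ((fun U : ℝ → ℝ => U x) '' IIT f T uT xc J) _ := fun x =>
    (Function.monotone_eval x).map_isGreatest hG
  refine ⟨fun x => ⟨(hGx x).nonempty, (hGx x).bddAbove⟩, ?_⟩
  convert hG.1 using 1
  exact funext fun x => (hGx x).csSup_eq
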